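/- Let f : [0,∞) → (0,∞) be continuous with ∫₀^∞ f(s) ds < ∞. Then there exists a positive solution u ∈ C²([0,∞)) of −u'' = f(u) on (0,∞) with u(0) = 0. Moreover one may take u = h⁻¹, where h(t) = ∫₀^t dz/g(z) and g(z) = ( 2 ∫_z^∞ f(s) ds )^{1/2}, noting that h is an increasing bijection from [0,∞) to [0,∞). -/

import Mathlib

/-!
With `F(z) = ∫_z^∞ f`, the function `g = √(2F)` is positive and decreasing on `[0,∞)` with
`g' = -f / g`. Hence `h' = 1 / g > 0` and `h t ≥ t / g 0`, so `h` is an increasing bijection of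
`[0,∞)`. Its inverse `u` satisfies `u' = g ∘ u`, hence `u'' = (g' ∘ u) · u' = -f ∘ u`. Taking every
derivative within `[0,∞)` (one-sided at `0`) is what yields `u ∈ C²([0,∞))`.
-/

open Set MeasureTheory

/-- `g(z) = (2 ∫_z^∞ f(s) ds)^{1/2}`. -/
noncomputable def gfun (f : ℝ → ℝ) (z : ℝ) : ℝ :=
  Real.sqrt (2 * ∫ s in Ioi z, f s)

/-- `h(t) = ∫_0^t dz / g(z)`. -/
noncomputable def hfun (f : ℝ → ℝ) (t : ℝ) : ℝ :=
  ∫ z in (0 : ℝ)..t, (gfun f z)⁻¹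

open Filter Topology Function

theorem HasDerivWithinAt.of_local_left_inverse {𝕜 : Type*} [NontriviallyNormedField 𝕜]
    {f g : 𝕜 → 𝕜} {f' a : 𝕜} {s t : Set 𝕜} (hg : Tendsto g (𝓝[s] a) (𝓝[t] (g a)))
    (hf : HasDerivWithinAt f f' t (g a)) (hf' : f' ≠ 0) (ha : a ∈ s)
    (hfg : ∀ᶠ x in 𝓝[s] a, f (g x) = x) : HasDerivWithinAt g f'⁻¹ s a :=
  HasFDerivWithinAt.of_local_left_inverse
    (f' := ContinuousLinearEquiv.unitsEquivAut 𝕜 (Units.mk0 f' hf')) hg hf ha hfg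

theorem StrictMonoOn.continuousOn_invFunOn {α β : Type*} [LinearOrder α] [TopologicalSpace α]
    [OrderTopology α] [Nonempty α] [LinearOrder β] [TopologicalSpace β] [OrderTopology β]
    {f : α → β} {s : Set α} {t : Set β} [s.OrdConnected] [t.OrdConnected]
    (hf : StrictMonoOn f s) (hst : f '' s = t) : ContinuousOn (invFunOn f s) t := by
  subst hst
  set e := hf.orderIso f s
  have he : (f '' s).domRestrict (invFunOn f s) = Subtype.val ∘ e.symm := by
    funext y
    refine hf.injOn (invFunOn_mem y.2) (e.symm y).2 ?_
    rw [invFunOn_eq y.2]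
    exact congrArg Subtype.val (e.apply_symm_apply y).symm
  rw [continuousOn_iff_continuous_domRestrict, he]
  exact continuous_subtype_val.comp e.symm.continuous

theorem MonotoneOn.image_Ici_eq_of_tendsto {α β : Type*} [ConditionallyCompleteLinearOrder α]
    [TopologicalSpace α] [OrderTopology α] [DenselyOrdered α] [LinearOrder β]
    [TopologicalSpace β] [OrderClosedTopology β] {f : α → β} {a : α}
    (hmono : MonotoneOn f (Ici a)) (hcont : ContinuousOn f (Ici a))
    (htop : Tendsto f atTop atTop) : f '' Ici a = Ici (f a) :=
  hmono.image_Ici_subset.antisymm (intermediate_value_Ici hcont htop)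

theorem contDiffOn_succ_of_hasDerivWithinAt {𝕜 F : Type*} [NontriviallyNormedField 𝕜]
    [NormedAddCommGroup F] [NormedSpace 𝕜 F] {s : Set 𝕜} {u v : 𝕜 → F} {n : ℕ}
    (hs : UniqueDiffOn 𝕜 s) (hu : ∀ x ∈ s, HasDerivWithinAt u (v x) s x)
    (hv : ContDiffOn 𝕜 n v s) : ContDiffOn 𝕜 (n + 1) u s := by
  rw [contDiffOn_succ_iff_derivWithin hs]
  exact ⟨fun x hx => (hu x hx).differentiableWithinAt, by simp,
    hv.congr fun x hx => (hu x hx).derivWithin (hs x hx)⟩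

theorem setIntegral_pos_of_forall_pos {X : Type*} [MeasurableSpace X] {μ : Measure X}
    {f : X → ℝ} {s : Set X} (hs : MeasurableSet s) (hμs : 0 < μ s) (hint : IntegrableOn f s μ)
    (hpos : ∀ x ∈ s, 0 < f x) : 0 < ∫ x in s, f x ∂μ := by
  rw [setIntegral_pos_iff_support_of_nonneg_ae _ hint]
  · rwa [inter_eq_right.mpr fun x hx => mem_support.mpr (hpos x hx).ne']
  · exact (ae_restrict_mem hs).mono fun x hx => (hpos x hx).le

section FTC

variable {E : Type*} [NormedAddCommGroup E] [NormedSpace ℝ E] [CompleteSpace E]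

theorem hasDerivWithinAt_intervalIntegral_Ici {φ : ℝ → E} {a z : ℝ}
    (hφ : ContinuousOn φ (Ici a)) (hz : a ≤ z) :
    HasDerivWithinAt (fun t => ∫ s in a..t, φ s) (φ z) (Ici a) z := by
  have hint : IntervalIntegrable φ volume a z :=
    (hφ.mono Icc_subset_Ici_self).intervalIntegrable_of_Icc hz
  rcases hz.eq_or_lt with rfl | hz
  · exact intervalIntegral.integral_hasDerivWithinAt_right hint (t := Ioi a)
      ((hφ.stronglyMeasurableAtFilter_nhdsWithin measurableSet_Ici a).filter_mono
        (nhdsWithin_mono _ Ioi_subset_Ici_self))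
      ((hφ a self_mem_Ici).mono Ioi_subset_Ici_self)
  · exact (intervalIntegral.integral_hasDerivAt_right hint
      ((hφ.mono Ioi_subset_Ici_self).stronglyMeasurableAtFilter isOpen_Ioi z hz)
      (hφ.continuousAt (Ici_mem_nhds hz))).hasDerivWithinAt

theorem hasDerivWithinAt_integral_Ioi {φ : ℝ → E} {a z : ℝ} (hcont : ContinuousOn φ (Ici a))
    (hint : IntegrableOn φ (Ioi a)) (hz : a ≤ z) :
    HasDerivWithinAt (fun y => ∫ s in Ioi y, φ s) (-φ z) (Ici a) z := by
  have hsplit : ∀ y ∈ Ici a, ∫ s in Ioi y, φ s = (∫ s in Ioi a, φ s) - ∫ s in a..y, φ s :=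
    fun y hy => by rw [← intervalIntegral.integral_Ioi_sub_Ioi hint hy, sub_sub_cancel]
  exact ((hasDerivWithinAt_intervalIntegral_Ici hcont hz).const_sub _).congr hsplit
    (hsplit z hz)

end FTC

section HalfLine

variable {f : ℝ → ℝ}

theorem hfun_zero : hfun f 0 = 0 := intervalIntegral.integral_same

theorem integral_Ioi_pos (hfpos : ∀ s ∈ Ici (0 : ℝ), 0 < f s) (hfint : IntegrableOn f (Ioi 0))
    {z : ℝ} (hz : 0 ≤ z) : 0 < ∫ s in Ioi z, f s :=
  setIntegral_pos_of_forall_pos measurableSet_Ioi (by simp)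
    (hfint.mono_set (Ioi_subset_Ioi hz)) fun s hs => hfpos s (hz.trans hs.le)

theorem gfun_pos (hfpos : ∀ s ∈ Ici (0 : ℝ), 0 < f s) (hfint : IntegrableOn f (Ioi 0))
    {z : ℝ} (hz : 0 ≤ z) : 0 < gfun f z :=
  Real.sqrt_pos.mpr (mul_pos two_pos (integral_Ioi_pos hfpos hfint hz))

theorem gfun_le_gfun_zero (hfpos : ∀ s ∈ Ici (0 : ℝ), 0 < f s) (hfint : IntegrableOn f (Ioi 0))
    {z : ℝ} (hz : 0 ≤ z) : gfun f z ≤ gfun f 0 := by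
  refine Real.sqrt_le_sqrt (mul_le_mul_of_nonneg_left ?_ zero_le_two)
  exact setIntegral_mono_set hfint
    ((ae_restrict_mem measurableSet_Ioi).mono fun s hs => (hfpos s (Ioi_subset_Ici_self hs)).le)
    (Ioi_subset_Ioi hz).eventuallyLE

theorem hasDerivWithinAt_gfun (hfcont : ContinuousOn f (Ici 0))
    (hfpos : ∀ s ∈ Ici (0 : ℝ), 0 < f s) (hfint : IntegrableOn f (Ioi 0)) {z : ℝ} (hz : 0 ≤ z) :
    HasDerivWithinAt (gfun f) (-f z / gfun f z) (Ici 0) z := by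
  have hF := integral_Ioi_pos hfpos hfint hz
  have hsqrt : HasDerivWithinAt (gfun f) (2 * -f z / (2 * gfun f z)) (Ici 0) z :=
    ((hasDerivWithinAt_integral_Ioi hfcont hfint hz).const_mul 2).sqrt (by positivity)
  rwa [mul_div_mul_left _ _ two_ne_zero] at hsqrt

theorem continuousOn_inv_gfun (hfcont : ContinuousOn f (Ici 0))
    (hfpos : ∀ s ∈ Ici (0 : ℝ), 0 < f s) (hfint : IntegrableOn f (Ioi 0)) :
    ContinuousOn (fun z => (gfun f z)⁻¹) (Ici 0) :=
  ContinuousOn.inv₀ (fun _ hz => (hasDerivWithinAt_gfun hfcont hfpos hfint hz).continuousWithinAt)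
    fun _ hz => (gfun_pos hfpos hfint hz).ne'

theorem hasDerivWithinAt_hfun (hfcont : ContinuousOn f (Ici 0))
    (hfpos : ∀ s ∈ Ici (0 : ℝ), 0 < f s) (hfint : IntegrableOn f (Ioi 0)) {t : ℝ} (ht : 0 ≤ t) :
    HasDerivWithinAt (hfun f) (gfun f t)⁻¹ (Ici 0) t :=
  hasDerivWithinAt_intervalIntegral_Ici (continuousOn_inv_gfun hfcont hfpos hfint) ht

theorem continuousOn_hfun (hfcont : ContinuousOn f (Ici 0))
    (hfpos : ∀ s ∈ Ici (0 : ℝ), 0 < f s) (hfint : IntegrableOn f (Ioi 0)) :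
    ContinuousOn (hfun f) (Ici 0) := fun _ ht =>
  (hasDerivWithinAt_hfun hfcont hfpos hfint ht).continuousWithinAt

theorem strictMonoOn_hfun (hfcont : ContinuousOn f (Ici 0))
    (hfpos : ∀ s ∈ Ici (0 : ℝ), 0 < f s) (hfint : IntegrableOn f (Ioi 0)) :
    StrictMonoOn (hfun f) (Ici 0) := by
  refine strictMonoOn_of_deriv_pos (convex_Ici 0) (continuousOn_hfun hfcont hfpos hfint) ?_
  intro t ht
  rw [interior_Ici] at ht
  rw [((hasDerivWithinAt_hfun hfcont hfpos hfint ht.le).hasDerivAt (Ici_mem_nhds ht)).deriv]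
  exact inv_pos.mpr (gfun_pos hfpos hfint ht.le)

theorem le_hfun (hfcont : ContinuousOn f (Ici 0))
    (hfpos : ∀ s ∈ Ici (0 : ℝ), 0 < f s) (hfint : IntegrableOn f (Ioi 0)) {t : ℝ} (ht : 0 ≤ t) :
    t * (gfun f 0)⁻¹ ≤ hfun f t := by
  have hmono : ∫ _ in (0 : ℝ)..t, (gfun f 0)⁻¹ ≤ hfun f t :=
    intervalIntegral.integral_mono_on ht intervalIntegrable_const
      ((continuousOn_inv_gfun hfcont hfpos hfint).mono Icc_subset_Ici_self
        |>.intervalIntegrable_of_Icc ht)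
      fun z hz => inv_anti₀ (gfun_pos hfpos hfint hz.1) (gfun_le_gfun_zero hfpos hfint hz.1)
  rwa [intervalIntegral.integral_const, sub_zero, smul_eq_mul] at hmono

theorem image_hfun_Ici (hfcont : ContinuousOn f (Ici 0))
    (hfpos : ∀ s ∈ Ici (0 : ℝ), 0 < f s) (hfint : IntegrableOn f (Ioi 0)) :
    hfun f '' Ici 0 = Ici 0 := by
  have htop : Tendsto (hfun f) atTop atTop :=
    tendsto_atTop_mono' atTop
      ((eventually_ge_atTop 0).mono fun _ ht => le_hfun hfcont hfpos hfint ht)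
      (tendsto_id.atTop_mul_const (inv_pos.mpr (gfun_pos hfpos hfint le_rfl)))
  have himage := (strictMonoOn_hfun hfcont hfpos hfint).monotoneOn.image_Ici_eq_of_tendsto
    (continuousOn_hfun hfcont hfpos hfint) htop
  rwa [hfun_zero] at himage

end HalfLine

noncomputable def hfunInv (f : ℝ → ℝ) : ℝ → ℝ := invFunOn (hfun f) (Ici 0)

section Inverse

variable {f : ℝ → ℝ}

theorem hfunInv_mem_Ici (hfcont : ContinuousOn f (Ici 0))
    (hfpos : ∀ s ∈ Ici (0 : ℝ), 0 < f s) (hfint : IntegrableOn f (Ioi 0)) {x : ℝ} (hx : 0 ≤ x) :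
    0 ≤ hfunInv f x :=
  invFunOn_mem (show x ∈ hfun f '' Ici 0 by rwa [image_hfun_Ici hfcont hfpos hfint])

theorem hfun_hfunInv (hfcont : ContinuousOn f (Ici 0))
    (hfpos : ∀ s ∈ Ici (0 : ℝ), 0 < f s) (hfint : IntegrableOn f (Ioi 0)) {x : ℝ} (hx : 0 ≤ x) :
    hfun f (hfunInv f x) = x :=
  invFunOn_eq (show x ∈ hfun f '' Ici 0 by rwa [image_hfun_Ici hfcont hfpos hfint])

theorem hfunInv_zero (hfcont : ContinuousOn f (Ici 0))
    (hfpos : ∀ s ∈ Ici (0 : ℝ), 0 < f s) (hfint : IntegrableOn f (Ioi 0)) : hfunInv f 0 = 0 := by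
  have h := (strictMonoOn_hfun hfcont hfpos hfint).injOn.leftInvOn_invFunOn
    (self_mem_Ici (a := (0 : ℝ)))
  rwa [hfun_zero] at h

theorem hfunInv_pos (hfcont : ContinuousOn f (Ici 0))
    (hfpos : ∀ s ∈ Ici (0 : ℝ), 0 < f s) (hfint : IntegrableOn f (Ioi 0)) {x : ℝ} (hx : 0 < x) :
    0 < hfunInv f x := by
  refine (hfunInv_mem_Ici hfcont hfpos hfint hx.le).lt_of_ne fun h => hx.ne ?_
  rw [← hfun_hfunInv hfcont hfpos hfint hx.le, ← h, hfun_zero]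

theorem continuousOn_hfunInv (hfcont : ContinuousOn f (Ici 0))
    (hfpos : ∀ s ∈ Ici (0 : ℝ), 0 < f s) (hfint : IntegrableOn f (Ioi 0)) :
    ContinuousOn (hfunInv f) (Ici 0) :=
  (strictMonoOn_hfun hfcont hfpos hfint).continuousOn_invFunOn (image_hfun_Ici hfcont hfpos hfint)

theorem hasDerivWithinAt_hfunInv (hfcont : ContinuousOn f (Ici 0))
    (hfpos : ∀ s ∈ Ici (0 : ℝ), 0 < f s) (hfint : IntegrableOn f (Ioi 0)) {x : ℝ} (hx : 0 ≤ x) :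
    HasDerivWithinAt (hfunInv f) (gfun f (hfunInv f x)) (Ici 0) x := by
  have hux := hfunInv_mem_Ici hfcont hfpos hfint hx
  simpa only [inv_inv] using (hasDerivWithinAt_hfun hfcont hfpos hfint hux).of_local_left_inverse
    ((continuousOn_hfunInv hfcont hfpos hfint x hx).tendsto_nhdsWithin
      fun _ hy => hfunInv_mem_Ici hfcont hfpos hfint hy)
    (inv_ne_zero (gfun_pos hfpos hfint hux).ne') hx
    (eventually_nhdsWithin_of_forall fun _ hy => hfun_hfunInv hfcont hfpos hfint hy)

theorem hasDerivWithinAt_gfun_comp_hfunInv (hfcont : ContinuousOn f (Ici 0))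
    (hfpos : ∀ s ∈ Ici (0 : ℝ), 0 < f s) (hfint : IntegrableOn f (Ioi 0)) {x : ℝ} (hx : 0 ≤ x) :
    HasDerivWithinAt (fun y => gfun f (hfunInv f y)) (-f (hfunInv f x)) (Ici 0) x := by
  have hux := hfunInv_mem_Ici hfcont hfpos hfint hx
  have hcomp := (hasDerivWithinAt_gfun hfcont hfpos hfint hux).comp x
    (hasDerivWithinAt_hfunInv hfcont hfpos hfint hx)
    fun _ hy => hfunInv_mem_Ici hfcont hfpos hfint hy
  rwa [div_mul_cancel₀ _ (gfun_pos hfpos hfint hux).ne'] at hcomp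

theorem contDiffOn_hfunInv (hfcont : ContinuousOn f (Ici 0))
    (hfpos : ∀ s ∈ Ici (0 : ℝ), 0 < f s) (hfint : IntegrableOn f (Ioi 0)) :
    ContDiffOn ℝ 2 (hfunInv f) (Ici 0) := by
  have hcont : ContDiffOn ℝ (0 : ℕ) (fun x => -f (hfunInv f x)) (Ici 0) :=
    contDiffOn_zero.mpr (hfcont.comp (continuousOn_hfunInv hfcont hfpos hfint)
      fun _ hy => hfunInv_mem_Ici hfcont hfpos hfint hy).neg
  exact contDiffOn_succ_of_hasDerivWithinAt (n := 1) (uniqueDiffOn_Ici 0)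
    (fun _ hx => hasDerivWithinAt_hfunInv hfcont hfpos hfint hx)
    (contDiffOn_succ_of_hasDerivWithinAt (uniqueDiffOn_Ici 0)
      (fun _ hx => hasDerivWithinAt_gfun_comp_hfunInv hfcont hfpos hfint hx) hcont)

theorem neg_deriv_deriv_hfunInv (hfcont : ContinuousOn f (Ici 0))
    (hfpos : ∀ s ∈ Ici (0 : ℝ), 0 < f s) (hfint : IntegrableOn f (Ioi 0)) {x : ℝ} (hx : 0 < x) :
    -deriv (deriv (hfunInv f)) x = f (hfunInv f x) := by
  have hderiv : deriv (hfunInv f) =ᶠ[𝓝 x] fun y => gfun f (hfunInv f y) := by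
    filter_upwards [Ioi_mem_nhds hx] with y hy
    exact ((hasDerivWithinAt_hfunInv hfcont hfpos hfint hy.le).hasDerivAt (Ici_mem_nhds hy)).deriv
  rw [hderiv.deriv_eq, ((hasDerivWithinAt_gfun_comp_hfunInv hfcont hfpos hfint hx.le).hasDerivAt
    (Ici_mem_nhds hx)).deriv, neg_neg]

end Inverse

/-- If `f : [0,∞) → (0,∞)` is continuous with `∫_0^∞ f < ∞`, then `-u'' = f(u)` on
`(0,∞)`, `u(0) = 0`, has a positive solution `u ∈ C²([0,∞))`; moreover one may take
`u = h⁻¹` where `h(t) = ∫_0^t dz/g(z)`, `g(z) = (2∫_z^∞ f)^{1/2}`, `h` being an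
increasing bijection of `[0,∞)` onto itself. -/
theorem exists_solution_ODE_of_integrable (f : ℝ → ℝ)
    (hfcont : ContinuousOn f (Ici 0))
    (hfpos : ∀ s ∈ Ici (0 : ℝ), 0 < f s)
    (hfint : IntegrableOn f (Ioi 0)) :
    StrictMonoOn (hfun f) (Ici 0) ∧
    (hfun f) '' (Ici 0) = Ici 0 ∧
    ∃ u : ℝ → ℝ,
      ContDiffOn ℝ 2 u (Ici 0) ∧
      u 0 = 0 ∧
      (∀ x : ℝ, 0 < x → 0 < u x) ∧
      (∀ x : ℝ, 0 < x → -(deriv (deriv u) x) = f (u x)) ∧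
      (∀ x : ℝ, 0 ≤ x → hfun f (u x) = x) :=
  ⟨strictMonoOn_hfun hfcont hfpos hfint, image_hfun_Ici hfcont hfpos hfint, hfunInv f,
    contDiffOn_hfunInv hfcont hfpos hfint, hfunInv_zero hfcont hfpos hfint,
    fun _ hx => hfunInv_pos hfcont hfpos hfint hx,
    fun _ hx => neg_deriv_deriv_hfunInv hfcont hfpos hfint hx,
    fun _ hx => hfun_hfunInv hfcont hfpos hfint hx⟩
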